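/- For all real numbers x, y ∈ [-C, C], we have (1/2)·σ(C)(1-σ(C))·(y-x)² ≤ D(σ(x)‖σ(y)) ≤ (1/8)·(y-x)². -/

import Mathlib

noncomputable def logistic (x : ℝ) : ℝ := Real.exp x / (1 + Real.exp x)

noncomputable def klBer (p q : ℝ) : ℝ :=
  p * Real.log (p / q) + (1 - p) * Real.log ((1 - p) / (1 - q))

/-!
With `softplus t = log (1 + exp t)`, one has `log σ(t) = t - softplus t` and
`log (1 - σ(t)) = -softplus t`, so `D(σ(x)‖σ(y))` is the Bregman divergence
`softplus y - softplus x - σ(x) (y - x)` of `softplus`. Its second derivative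
`σ(1 - σ) = 1 / (2 + 2 cosh t)` lies between `σ(C)(1 - σ(C))` and `1/4` on `[-C, C]`, and a
second-order Taylor estimate turns these curvature bounds into the two quadratic bounds.
-/

open Real Set

theorem le_of_hasDerivAt_of_deriv_mul_sub_nonneg {g g' : ℝ → ℝ} {x y : ℝ}
    (hg : ∀ t ∈ uIcc x y, HasDerivAt g (g' t) t) (hg' : ∀ t ∈ uIcc x y, 0 ≤ g' t * (t - x)) :
    g x ≤ g y := by
  have hcont : ContinuousOn g (uIcc x y) := fun t ht => (hg t ht).continuousAt.continuousWithinAt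
  have hderiv : ∀ t ∈ interior (uIcc x y), HasDerivWithinAt g (g' t) (interior (uIcc x y)) t :=
    fun t ht => (hg t (interior_subset ht)).hasDerivWithinAt
  rcases le_total x y with hxy | hyx
  · rw [uIcc_of_le hxy] at hcont hderiv hg'
    refine monotoneOn_of_hasDerivWithinAt_nonneg (convex_Icc x y) hcont hderiv (fun t ht => ?_)
      (left_mem_Icc.2 hxy) (right_mem_Icc.2 hxy) hxy
    rw [interior_Icc] at ht
    exact nonneg_of_mul_nonneg_left (hg' t (Ioo_subset_Icc_self ht)) (sub_pos.2 ht.1)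
  · rw [uIcc_of_ge hyx] at hcont hderiv hg'
    refine antitoneOn_of_hasDerivWithinAt_nonpos (convex_Icc y x) hcont hderiv (fun t ht => ?_)
      (left_mem_Icc.2 hyx) (right_mem_Icc.2 hyx) hyx
    rw [interior_Icc] at ht
    exact nonpos_of_mul_nonneg_left (hg' t (Ioo_subset_Icc_self ht)) (sub_neg.2 ht.2)

def bregmanDiv (f f' : ℝ → ℝ) (x y : ℝ) : ℝ := f y - f x - f' x * (y - x)

section Taylor

variable {f f' f'' : ℝ → ℝ} {x y : ℝ}

theorem mul_sq_le_bregmanDiv {m : ℝ} (hf : ∀ t ∈ uIcc x y, HasDerivAt f (f' t) t)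
    (hf' : ∀ t ∈ uIcc x y, HasDerivAt f' (f'' t) t) (hm : ∀ t ∈ uIcc x y, m ≤ f'' t) :
    m / 2 * (y - x) ^ 2 ≤ bregmanDiv f f' x y := by
  -- `k` is the derivative of the Taylor remainder; it vanishes at `x` and is monotone, so it has
  -- the sign of `t - x`.
  set k : ℝ → ℝ := fun t => f' t - f' x - m * (t - x)
  have hk : ∀ t ∈ uIcc x y, HasDerivAt k (f'' t - m) t := fun t ht =>
    (((hf' t ht).sub_const _).sub (((hasDerivAt_id' t).sub_const x).const_mul m)).congr_deriv
      (by ring)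
  have hk_mono : MonotoneOn k (uIcc x y) :=
    monotoneOn_of_hasDerivWithinAt_nonneg (convex_uIcc x y)
      (fun t ht => (hk t ht).continuousAt.continuousWithinAt)
      (fun t ht => (hk t (interior_subset ht)).hasDerivWithinAt)
      (fun t ht => sub_nonneg.2 (hm t (interior_subset ht)))
  have hkx : k x = 0 := by simp [k]
  have hg : ∀ t ∈ uIcc x y, HasDerivAt (fun s => f s - f x - f' x * (s - x) - m / 2 * (s - x) ^ 2)
      (k t) t := fun t ht =>
    ((((hf t ht).sub_const _).sub (((hasDerivAt_id' t).sub_const x).const_mul (f' x))).sub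
      ((((hasDerivAt_id' t).sub_const x).pow 2).const_mul (m / 2))).congr_deriv (by ring)
  have key := le_of_hasDerivAt_of_deriv_mul_sub_nonneg hg fun t ht => by
    rcases le_total x t with hxt | htx
    · exact mul_nonneg (hkx ▸ hk_mono left_mem_uIcc ht hxt) (sub_nonneg.2 hxt)
    · exact mul_nonneg_of_nonpos_of_nonpos (hkx ▸ hk_mono ht left_mem_uIcc htx) (sub_nonpos.2 htx)
  unfold bregmanDiv
  linarith

theorem bregmanDiv_le_mul_sq {L : ℝ} (hf : ∀ t ∈ uIcc x y, HasDerivAt f (f' t) t)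
    (hf' : ∀ t ∈ uIcc x y, HasDerivAt f' (f'' t) t) (hL : ∀ t ∈ uIcc x y, f'' t ≤ L) :
    bregmanDiv f f' x y ≤ L / 2 * (y - x) ^ 2 := by
  have := mul_sq_le_bregmanDiv (fun t ht => (hf t ht).neg) (fun t ht => (hf' t ht).neg)
    fun t ht => neg_le_neg (hL t ht)
  simp only [bregmanDiv, Pi.neg_apply] at this ⊢
  linarith

end Taylor

noncomputable def softplus (t : ℝ) : ℝ := log (1 + exp t)

theorem hasDerivAt_softplus (t : ℝ) : HasDerivAt softplus (logistic t) t :=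
  ((hasDerivAt_exp t).const_add 1).log (add_pos one_pos (exp_pos t)).ne'

theorem hasDerivAt_logistic (t : ℝ) :
    HasDerivAt logistic (logistic t * (1 - logistic t)) t := by
  have h := (hasDerivAt_exp t).div ((hasDerivAt_exp t).const_add 1) (by positivity)
  refine h.congr_deriv ?_
  unfold logistic
  field_simp

theorem logistic_mul_one_sub_logistic (t : ℝ) :
    logistic t * (1 - logistic t) = 1 / (2 + 2 * cosh t) := by
  rw [cosh_eq, exp_neg]
  unfold logistic
  field_simp
  ring

theorem logistic_mul_one_sub_logistic_le (t : ℝ) : logistic t * (1 - logistic t) ≤ 1 / 4 := by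
  rw [logistic_mul_one_sub_logistic]
  gcongr
  linarith [one_le_cosh t]

theorem logistic_mul_one_sub_logistic_le_of_abs_le {s t : ℝ} (h : |t| ≤ |s|) :
    logistic s * (1 - logistic s) ≤ logistic t * (1 - logistic t) := by
  rw [logistic_mul_one_sub_logistic, logistic_mul_one_sub_logistic]
  gcongr
  exact cosh_le_cosh.2 h

theorem log_logistic (t : ℝ) : log (logistic t) = t - softplus t := by
  rw [logistic, softplus, log_div (exp_pos t).ne' (add_pos one_pos (exp_pos t)).ne', log_exp]

theorem log_one_sub_logistic (t : ℝ) : log (1 - logistic t) = -softplus t := by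
  have : 1 - logistic t = (1 + exp t)⁻¹ := by
    unfold logistic
    field_simp
    ring
  rw [this, log_inv, softplus]

theorem klBer_logistic (x y : ℝ) :
    klBer (logistic x) (logistic y) = bregmanDiv softplus logistic x y := by
  have hpos : ∀ t, 0 < logistic t := fun t => by unfold logistic; positivity
  have hlt : ∀ t, logistic t < 1 := fun t => by
    unfold logistic; rw [div_lt_one (by positivity)]; linarith
  rw [klBer, bregmanDiv, log_div (hpos x).ne' (hpos y).ne',
    log_div (sub_pos.2 (hlt x)).ne' (sub_pos.2 (hlt y)).ne', log_logistic, log_logistic,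
    log_one_sub_logistic, log_one_sub_logistic]
  ring

theorem stmt_7_general (C : ℝ) (x y : ℝ)
    (hx : x ∈ Set.Icc (-C) C) (hy : y ∈ Set.Icc (-C) C) :
    (1 / 2) * logistic C * (1 - logistic C) * (y - x) ^ 2 ≤
      klBer (logistic x) (logistic y) ∧
    klBer (logistic x) (logistic y) ≤ (1 / 8) * (y - x) ^ 2 := by
  rw [klBer_logistic]
  have hsoft : ∀ t ∈ uIcc x y, HasDerivAt softplus (logistic t) t :=
    fun t _ => hasDerivAt_softplus t
  have hlog : ∀ t ∈ uIcc x y, HasDerivAt logistic (logistic t * (1 - logistic t)) t :=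
    fun t _ => hasDerivAt_logistic t
  have hcurv : ∀ t ∈ uIcc x y, logistic C * (1 - logistic C) ≤ logistic t * (1 - logistic t) :=
    fun t ht => logistic_mul_one_sub_logistic_le_of_abs_le <|
      (abs_le.2 (uIcc_subset_Icc hx hy ht)).trans (le_abs_self C)
  constructor
  · linarith [mul_sq_le_bregmanDiv hsoft hlog hcurv]
  · linarith [bregmanDiv_le_mul_sq hsoft hlog fun t _ => logistic_mul_one_sub_logistic_le t]

theorem stmt_7 (C : ℝ) (hC : 0 < C) (x y : ℝ)
    (hx : x ∈ Set.Icc (-C) C) (hy : y ∈ Set.Icc (-C) C) :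
    (1 / 2) * logistic C * (1 - logistic C) * (y - x) ^ 2 ≤
      klBer (logistic x) (logistic y) ∧
    klBer (logistic x) (logistic y) ≤ (1 / 8) * (y - x) ^ 2 :=
  stmt_7_general C x y hx hy
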